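/- arXiv:1711.07622 — 2 statements merged into one kernel-verified Lean document; each statement's English description precedes it below -/
import Mathlib

section
/- For any $d \geq 1$ and $s \geq 1$, the cardinality of the hyperbolic cross satisfies $|\Lambda^{HC}_{d,s}| \leq e^2 s^{2 + \log_2(d)}$. -/
/-!
Rankin's trick: for `α ≥ 0` every `i` in the cross satisfies `1 ≤ (s / ∏ ℓ, (i ℓ + 1)) ^ α`, so the
cardinality is at most `s ^ α` times the sum of `∏ ℓ, (i ℓ + 1) ^ (-α)` over the whole box
`{0, …, s - 1}ᵈ`, which factors as `(∑ n < s, (n + 1) ^ (-α)) ^ d`. For `α = 2 + log₂ d` each factor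
is at most `1 + 2 ^ (-log₂ d) ∑ m ≥ 2, m⁻² ≤ 1 + 1 / d`, and `(1 + 1 / d) ^ d ≤ e`.
-/

open scoped BigOperators

/-- The hyperbolic cross of order `s` in dimension `d`, as a finite set of multi-indices. -/
def hyperbolicCross (d s : ℕ) : Finset (Fin d → ℕ) :=
  (Fintype.piFinset fun _ : Fin d => Finset.range s).filter
    fun i => ∏ ℓ, (i ℓ + 1) ≤ s

open Finset Real

theorem card_filter_le_rpow_mul_sum_rpow_neg {ι : Type*} (t : Finset ι) (f : ι → ℝ)
    (hf : ∀ x ∈ t, 0 < f x) {c α : ℝ} (hc : 0 ≤ c) (hα : 0 ≤ α) :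
    (#(t.filter fun x => f x ≤ c) : ℝ) ≤ c ^ α * ∑ x ∈ t, f x ^ (-α) := by
  have hterm : ∀ x ∈ t, 0 ≤ c ^ α * f x ^ (-α) := fun x hx =>
    mul_nonneg (rpow_nonneg hc _) (rpow_nonneg (hf x hx).le _)
  rw [mul_sum, card_eq_sum_ones, Nat.cast_sum, Nat.cast_one]
  calc ∑ x ∈ t.filter (fun x => f x ≤ c), (1 : ℝ)
      ≤ ∑ x ∈ t.filter (fun x => f x ≤ c), c ^ α * f x ^ (-α) := by
        refine sum_le_sum fun x hx => ?_
        obtain ⟨hxt, hxc⟩ := mem_filter.mp hx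
        have hfx := hf x hxt
        rw [rpow_neg hfx.le, ← div_eq_mul_inv, ← div_rpow hc hfx.le]
        exact one_le_rpow ((one_le_div hfx).mpr hxc) hα
    _ ≤ ∑ x ∈ t, c ^ α * f x ^ (-α) :=
        sum_le_sum_of_subset_of_nonneg (filter_subset _ _) fun x hx _ => hterm x hx

theorem hyperbolicCross_card_le_rpow_mul_pow (d s : ℕ) {α : ℝ} (hα : 0 ≤ α) :
    (#(hyperbolicCross d s) : ℝ) ≤
      (s : ℝ) ^ α * (∑ n ∈ range s, ((n : ℝ) + 1) ^ (-α)) ^ d := by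
  have hcast : hyperbolicCross d s = (Fintype.piFinset fun _ : Fin d => range s).filter
      fun i => ∏ ℓ, ((i ℓ : ℝ) + 1) ≤ s :=
    filter_congr fun i _ => by exact_mod_cast Iff.rfl
  rw [hcast]
  refine (card_filter_le_rpow_mul_sum_rpow_neg _ _ (fun i _ => by positivity)
    (Nat.cast_nonneg s) hα).trans_eq ?_
  rw [← Fin.prod_const, prod_univ_sum]
  congr 1
  refine sum_congr rfl fun i _ => ?_
  exact (finsetProd_rpow _ _ (fun ℓ _ => by positivity) _).symm

theorem sum_range_inv_add_two_sq_le_one (s : ℕ) :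
    ∑ n ∈ range s, (((n : ℝ) + 2) ^ 2)⁻¹ ≤ 1 := by
  have := sum_Ioo_inv_sq_le (α := ℝ) 1 (s + 2)
  rw [← Ico_add_one_left_eq_Ioo, sum_Ico_eq_sum_range] at this
  norm_num at this
  simpa [add_comm] using this

theorem rpow_neg_two_add_le {x β : ℝ} (hx : 2 ≤ x) (hβ : 0 ≤ β) :
    x ^ (-(2 + β)) ≤ 2 ^ (-β) * (x ^ 2)⁻¹ := by
  have hx0 : 0 < x := by linarith
  rw [show -(2 + β) = -β + -2 by ring, rpow_add hx0, rpow_neg hx0.le 2, rpow_two]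
  exact mul_le_mul_of_nonneg_right
    (rpow_le_rpow_of_nonpos zero_lt_two hx (neg_nonpos.mpr hβ)) (by positivity)

theorem sum_range_rpow_neg_le (s : ℕ) {β : ℝ} (hβ : 0 ≤ β) :
    ∑ n ∈ range s, ((n : ℝ) + 1) ^ (-(2 + β)) ≤ 1 + 2 ^ (-β) := by
  calc ∑ n ∈ range s, ((n : ℝ) + 1) ^ (-(2 + β))
      ≤ ∑ n ∈ range (s + 1), ((n : ℝ) + 1) ^ (-(2 + β)) :=
        sum_le_sum_of_subset_of_nonneg (range_subset_range.mpr s.le_succ)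
          fun n _ _ => by positivity
    _ = ∑ n ∈ range s, ((n : ℝ) + 2) ^ (-(2 + β)) + 1 := by
        rw [sum_range_succ']
        push_cast
        simp only [zero_add, one_rpow, add_assoc, one_add_one_eq_two]
    _ ≤ 2 ^ (-β) * ∑ n ∈ range s, (((n : ℝ) + 2) ^ 2)⁻¹ + 1 := by
        rw [mul_sum]
        gcongr with n
        exact rpow_neg_two_add_le (by linarith [n.cast_nonneg (α := ℝ)]) hβ
    _ ≤ 1 + 2 ^ (-β) := by
        have := mul_le_mul_of_nonneg_left (sum_range_inv_add_two_sq_le_one s)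
          (rpow_nonneg zero_le_two (-β))
        linarith

theorem hyperbolicCross_card_le (d s : ℕ) {β : ℝ} (hβ : 0 ≤ β) :
    (#(hyperbolicCross d s) : ℝ) ≤ (s : ℝ) ^ (2 + β) * (1 + 2 ^ (-β)) ^ d := by
  refine (hyperbolicCross_card_le_rpow_mul_pow d s (α := 2 + β) (by positivity)).trans ?_
  gcongr
  exact sum_range_rpow_neg_le s hβ

theorem logb_two_natCast_nonneg (d : ℕ) : 0 ≤ logb 2 (d : ℝ) := by
  rcases d.eq_zero_or_pos with rfl | hd
  · simp
  · exact logb_nonneg one_lt_two (by exact_mod_cast hd)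

theorem one_add_two_rpow_neg_logb_pow_le_exp_one (d : ℕ) :
    (1 + (2 : ℝ) ^ (-logb 2 d)) ^ d ≤ exp 1 := by
  rcases d.eq_zero_or_pos with rfl | hd
  · simp
  have hd' : (0 : ℝ) < d := by exact_mod_cast hd
  rw [rpow_neg zero_le_two, rpow_logb zero_lt_two (by norm_num) hd', ← one_div]
  have := one_sub_div_pow_le_exp_neg (t := -1) (n := d) (by linarith)
  rwa [neg_div, sub_neg_eq_add, neg_neg] at this

theorem hyperbolicCross_card_le_rpow_general (d s : ℕ) :
    ((hyperbolicCross d s).card : ℝ) ≤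
      Real.exp 2 * (s : ℝ) ^ ((2 : ℝ) + Real.logb 2 d) := by
  calc ((hyperbolicCross d s).card : ℝ)
      ≤ (s : ℝ) ^ (2 + logb 2 d) * (1 + 2 ^ (-logb 2 d)) ^ d :=
        hyperbolicCross_card_le d s (logb_two_natCast_nonneg d)
    _ ≤ (s : ℝ) ^ (2 + logb 2 d) * exp 1 := by
        gcongr
        exact one_add_two_rpow_neg_logb_pow_le_exp_one d
    _ ≤ exp 2 * (s : ℝ) ^ (2 + logb 2 d) := by
        rw [mul_comm]
        gcongr
        norm_num

/-- Cardinality bound `|Λ^{HC}_{d,s}| ≤ e² s^{2 + log₂ d}`. -/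
theorem hyperbolicCross_card_le_rpow (d s : ℕ) (hd : 1 ≤ d) (hs : 1 ≤ s) :
    ((hyperbolicCross d s).card : ℝ) ≤
      Real.exp 2 * (s : ℝ) ^ ((2 : ℝ) + Real.logb 2 d) :=
  hyperbolicCross_card_le_rpow_general d s
end

section
/- Suppose $A \in \mathbb{C}^{m\times n}$ has the weighted robust null space property of order $K$ with constants $0 < \rho < 1$, $\tau > 0$: for all $\bm{z}$ and all $S$ with $|S|_{\bm{w}} \leq K$, $\|\bm{z}_S\|_2 \leq \frac{\rho}{\sqrt{K}}\|\bm{z}_{S^c}\|_{1,\bm{w}} + \tau\|A\bm{z}\|_2$. Let $\hat{\bm{x}}$ minimize $\|\bm{z}\|_{1,\bm{w}} + \lambda\|A\bm{z}-\bm{y}\|_2$ over $\bm{z} \in \mathbb{C}^n$ with $\lambda \geq \frac{2\tau\sqrt{K}}{1+\rho}$, where $\bm{y} = A\bm{x} + \bm{e}$. Then $\|\bm{x} - \hat{\bm{x}}\|_{1,\bm{w}} \leq \frac{2(1+\rho)}{1-\rho}\sigma_K(\bm{x})_{1,\bm{w}} + \frac{(1+\rho)\lambda + 2\tau\sqrt{K}}{1-\rho}\|\bm{e}\|_2$.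 -/
/-!
Put `h = x̂ - x` and pick a set `S` realising `σ_K(x)_{1,w}`. By Cauchy–Schwarz, the null space
property bounds the head `‖h_S‖_{1,w}` by `ρ ‖h_{Sᶜ}‖_{1,w} + τ√K ‖Ah‖₂`, and
`‖Ah‖₂ ≤ ‖Ax̂ - y‖₂ + ‖e‖₂`. Comparing the objective at `x̂` and at `x` bounds the tail
`‖h_{Sᶜ}‖_{1,w}` by the head plus `2σ_K(x)_{1,w} + λ(‖e‖₂ - ‖Ax̂ - y‖₂)`. Eliminating the tail
leaves the residual `‖Ax̂ - y‖₂` with the coefficient `2τ√K - (1+ρ)λ ≤ 0`, which is exactly where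
the lower bound on `λ` is needed.
-/

open scoped BigOperators

/-- Weighted best `K`-term (weighted cardinality) approximation error
`σ_K(z)_{1,w} = min { ‖z - z'‖_{1,w} : |supp z'|_w ≤ K }`. -/
noncomputable def sigmaK {n : ℕ} (w : Fin n → ℝ) (K : ℝ) (z : Fin n → ℂ) : ℝ :=
  sInf {t : ℝ | ∃ S : Finset (Fin n),
    (∑ i ∈ S, (w i) ^ 2) ≤ K ∧ t = ∑ i ∈ Sᶜ, w i * ‖z i‖}

open Finset Matrix

theorem exists_sigmaK_eq {n : ℕ} (w : Fin n → ℝ) {K : ℝ} (hK : 0 ≤ K) (z : Fin n → ℂ) :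
    ∃ S : Finset (Fin n), ∑ i ∈ S, w i ^ 2 ≤ K ∧ sigmaK w K z = ∑ i ∈ Sᶜ, w i * ‖z i‖ := by
  set s := {t : ℝ | ∃ S : Finset (Fin n), ∑ i ∈ S, w i ^ 2 ≤ K ∧ t = ∑ i ∈ Sᶜ, w i * ‖z i‖}
  have hfin : s.Finite := (Set.finite_range fun S : Finset (Fin n) => ∑ i ∈ Sᶜ, w i * ‖z i‖).subset
    fun _ ⟨S, _, hS⟩ => ⟨S, hS.symm⟩
  have hne : s.Nonempty := ⟨_, ∅, by simpa using hK, rfl⟩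
  exact hne.csInf_mem hfin

section

variable {ι E : Type*} [SeminormedAddCommGroup E]

theorem sqrt_sum_norm_add_sq_le [Fintype ι] (f g : ι → E) :
    √(∑ i, ‖f i + g i‖ ^ 2) ≤ √(∑ i, ‖f i‖ ^ 2) + √(∑ i, ‖g i‖ ^ 2) := by
  simpa only [PiLp.norm_eq_of_L2, WithLp.ofLp_add, Pi.add_apply] using
    norm_add_le (WithLp.toLp 2 f : PiLp 2 fun _ : ι => E) (WithLp.toLp 2 g)

theorem sum_mul_norm_le_sqrt_mul_sqrt {w : ι → ℝ} {K : ℝ} {S : Finset ι}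
    (hS : ∑ i ∈ S, w i ^ 2 ≤ K) (z : ι → E) :
    ∑ i ∈ S, w i * ‖z i‖ ≤ √K * √(∑ i ∈ S, ‖z i‖ ^ 2) :=
  (Real.sum_mul_le_sqrt_mul_sqrt S w _).trans <|
    mul_le_mul_of_nonneg_right (Real.sqrt_le_sqrt hS) (Real.sqrt_nonneg _)

theorem sum_mul_norm_le_of_sqrt_sum_sq_le {w : ι → ℝ} {K ρ b c : ℝ} (hK : 0 < K)
    {S : Finset ι} (hS : ∑ i ∈ S, w i ^ 2 ≤ K) {z : ι → E}
    (hz : √(∑ i ∈ S, ‖z i‖ ^ 2) ≤ ρ / √K * b + c) :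
    ∑ i ∈ S, w i * ‖z i‖ ≤ ρ * b + √K * c := by
  have hsK : 0 < √K := Real.sqrt_pos.mpr hK
  calc ∑ i ∈ S, w i * ‖z i‖ ≤ √K * √(∑ i ∈ S, ‖z i‖ ^ 2) := sum_mul_norm_le_sqrt_mul_sqrt hS z
    _ ≤ √K * (ρ / √K * b + c) := mul_le_mul_of_nonneg_left hz hsK.le
    _ = ρ * b + √K * c := by field_simp

theorem sum_compl_mul_norm_sub_le [Fintype ι] [DecidableEq ι] {w : ι → ℝ} (hw : ∀ i, 0 ≤ w i)
    (S : Finset ι) (x x' : ι → E) :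
    ∑ i ∈ Sᶜ, w i * ‖x' i - x i‖ ≤
      (∑ i, w i * ‖x' i‖ - ∑ i, w i * ‖x i‖) + 2 * ∑ i ∈ Sᶜ, w i * ‖x i‖
        + ∑ i ∈ S, w i * ‖x' i - x i‖ := by
  have htail : ∑ i ∈ Sᶜ, w i * ‖x' i - x i‖ ≤ ∑ i ∈ Sᶜ, w i * ‖x' i‖ + ∑ i ∈ Sᶜ, w i * ‖x i‖ := by
    rw [← sum_add_distrib]
    refine sum_le_sum fun i _ => ?_
    rw [← mul_add]
    exact mul_le_mul_of_nonneg_left (norm_sub_le _ _) (hw i)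
  have hhead : ∑ i ∈ S, w i * ‖x i‖ ≤ ∑ i ∈ S, w i * ‖x' i‖ + ∑ i ∈ S, w i * ‖x' i - x i‖ := by
    rw [← sum_add_distrib]
    refine sum_le_sum fun i _ => ?_
    rw [← mul_add]
    exact mul_le_mul_of_nonneg_left (norm_le_norm_add_norm_sub _ _) (hw i)
  rw [← sum_add_sum_compl S fun i => w i * ‖x' i‖, ← sum_add_sum_compl S fun i => w i * ‖x i‖]
  linarith

end

theorem add_le_of_head_le_of_tail_le {a b σ R E ρ t lam : ℝ} (hρ : -1 ≤ ρ) (hρ1 : ρ < 1)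
    (hR : 0 ≤ R) (hlam : 2 * t ≤ (1 + ρ) * lam)
    (hhead : a ≤ ρ * b + t * (R + E)) (htail : b ≤ lam * E - lam * R + 2 * σ + a) :
    a + b ≤ 2 * (1 + ρ) / (1 - ρ) * σ + ((1 + ρ) * lam + 2 * t) / (1 - ρ) * E := by
  have htail' : (1 - ρ) * b ≤ (lam + t) * E + (t - lam) * R + 2 * σ := by linarith
  rw [div_mul_eq_mul_div, div_mul_eq_mul_div, ← add_div, le_div_iff₀ (by linarith)]
  nlinarith [mul_le_mul_of_nonneg_left hhead (by linarith : 0 ≤ 1 - ρ),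
    mul_le_mul_of_nonneg_left htail' (by linarith : 0 ≤ 1 + ρ),
    mul_nonpos_of_nonpos_of_nonneg (by linarith : 2 * t - (1 + ρ) * lam ≤ 0) hR]

/-- Weighted `ℓ¹` error bound for the weighted square-root LASSO decoder under the
weighted robust null space property of order `K`, with tuning parameter
`λ ≥ 2τ√K/(1+ρ)`. -/
theorem wsrlasso_l1_error_bound {m n : ℕ} (A : Matrix (Fin m) (Fin n) ℂ)
    (w : Fin n → ℝ) (hw : ∀ i, 0 < w i) (K ρ τ lam : ℝ)
    (hK : 0 < K) (hρ : 0 < ρ) (hρ1 : ρ < 1) (hτ : 0 < τ)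
    (hNSP : ∀ z : Fin n → ℂ, ∀ S : Finset (Fin n), (∑ i ∈ S, (w i) ^ 2) ≤ K →
      Real.sqrt (∑ i ∈ S, ‖z i‖ ^ 2) ≤
        ρ / Real.sqrt K * (∑ i ∈ Sᶜ, w i * ‖z i‖)
          + τ * Real.sqrt (∑ k, ‖(A.mulVec z) k‖ ^ 2))
    (hlam : 2 * τ * Real.sqrt K / (1 + ρ) ≤ lam)
    (x xh : Fin n → ℂ) (e y : Fin m → ℂ) (hy : y = A.mulVec x + e)
    (hmin : ∀ z : Fin n → ℂ,
      (∑ j, w j * ‖xh j‖) + lam * Real.sqrt (∑ i, ‖(A.mulVec xh - y) i‖ ^ 2) ≤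
        (∑ j, w j * ‖z j‖) + lam * Real.sqrt (∑ i, ‖(A.mulVec z - y) i‖ ^ 2)) :
    (∑ j, w j * ‖x j - xh j‖) ≤
      2 * (1 + ρ) / (1 - ρ) * sigmaK w K x
        + ((1 + ρ) * lam + 2 * τ * Real.sqrt K) / (1 - ρ) *
            Real.sqrt (∑ i, ‖e i‖ ^ 2) := by
  obtain ⟨S, hS, hσ⟩ := exists_sigmaK_eq w hK.le x
  set R := √(∑ i, ‖(A *ᵥ xh - y) i‖ ^ 2)
  set E := √(∑ i, ‖e i‖ ^ 2)
  have hAh : √(∑ k, ‖(A *ᵥ (xh - x)) k‖ ^ 2) ≤ R + E := by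
    have hres : A *ᵥ (xh - x) = (A *ᵥ xh - y) + e := by rw [Matrix.mulVec_sub, hy]; abel
    simpa only [hres, Pi.add_apply] using sqrt_sum_norm_add_sq_le (A *ᵥ xh - y) e
  have hopt : ∑ j, w j * ‖xh j‖ + lam * R ≤ ∑ j, w j * ‖x j‖ + lam * E := by
    simpa only [hy, sub_add_cancel_left, Pi.neg_apply, norm_neg] using hmin x
  have hhead : ∑ i ∈ S, w i * ‖xh i - x i‖ ≤
      ρ * ∑ i ∈ Sᶜ, w i * ‖xh i - x i‖ + τ * √K * (R + E) := by
    have := sum_mul_norm_le_of_sqrt_sum_sq_le hK hS (hNSP (xh - x) S hS)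
    simp only [Pi.sub_apply] at this
    linarith [mul_le_mul_of_nonneg_left hAh (mul_pos hτ (Real.sqrt_pos.mpr hK)).le]
  have htail := sum_compl_mul_norm_sub_le (fun i => (hw i).le) S x xh
  have hlam' : 2 * (τ * √K) ≤ (1 + ρ) * lam := by
    rw [div_le_iff₀ (by linarith)] at hlam
    linarith
  simp only [norm_sub_rev (x _)]
  rw [hσ, ← sum_add_sum_compl S, mul_assoc 2 τ]
  exact add_le_of_head_le_of_tail_le (by linarith) hρ1 (Real.sqrt_nonneg _) hlam' hhead
    (by linarith)
end
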